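/- arXiv:1507.03155 — 5 statements merged into one kernel-verified Lean document; each statement's English description precedes it below -/
import Mathlib

section
/- The image of K0 = ker d0 under d1, i.e. the subgroup d1(K0) of FreeGroup X, equals the normal closure in FreeGroup X of the set of defining relators {r y | y ∈ Y}. (This identifies R = d1(Ker d0) with the normal closure of the defining relations.) -/
/-- The degeneracy `s₀ : F(X) → F(X ⊕ Y)`, sending each generator `x` to `Sum.inl x`. -/
def s0 (X Y : Type*) : FreeGroup X →* FreeGroup (X ⊕ Y) :=
  FreeGroup.lift fun x => FreeGroup.of (Sum.inl x)

/-- The face map `d₀ : F(X ⊕ Y) → F(X)`, with `d₀ x = x` and `d₀ y = 1`. -/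
def d0 (X Y : Type*) : FreeGroup (X ⊕ Y) →* FreeGroup X :=
  FreeGroup.lift (Sum.elim FreeGroup.of fun _ => 1)

/-- The face map `d₁ : F(X ⊕ Y) → F(X)`, with `d₁ x = x` and `d₁ y = r y`. -/
def d1 {X Y : Type*} (r : Y → FreeGroup X) : FreeGroup (X ⊕ Y) →* FreeGroup X :=
  FreeGroup.lift (Sum.elim FreeGroup.of r)

lemma d1_surjective {X Y : Type*} (r : Y → FreeGroup X) :
    Function.Surjective (d1 r) := by
  have h : (d1 r).comp (s0 X Y) = MonoidHom.id _ := by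
    apply FreeGroup.ext_hom
    intro x
    simp [d1, s0]
  intro g
  exact ⟨s0 X Y g, by rw [← MonoidHom.comp_apply, h]; rfl⟩

/-- `R = d₁(K₀) = d₁(Ker d₀)` equals the normal closure in `F(X)` of the set of
defining relators `{r y | y ∈ Y}`. -/
theorem map_ker_d0_eq_normalClosure_relators {X Y : Type*} (r : Y → FreeGroup X) :
    Subgroup.map (d1 r) (d0 X Y).ker = Subgroup.normalClosure (Set.range r) := by
  set N := Subgroup.normalClosure (Set.range r) with hN
  apply le_antisymm
  · -- key: mk' N ∘ d1 = mk' N ∘ d0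
    have key : (QuotientGroup.mk' N).comp (d1 r) = (QuotientGroup.mk' N).comp (d0 X Y) := by
      apply FreeGroup.ext_hom
      rintro (x | y)
      · simp [d1, d0]
      · simp only [MonoidHom.comp_apply, d1, d0, FreeGroup.lift_apply_of, Sum.elim_inr, map_one]
        rw [QuotientGroup.mk'_apply, QuotientGroup.eq_one_iff]
        exact Subgroup.subset_normalClosure ⟨y, rfl⟩
    rintro g ⟨w, hw, rfl⟩
    have : (QuotientGroup.mk' N) (d1 r w) = 1 := by
      rw [← MonoidHom.comp_apply, key, MonoidHom.comp_apply,
        MonoidHom.mem_ker.mp hw, map_one]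
    rwa [QuotientGroup.mk'_apply, QuotientGroup.eq_one_iff] at this
  · have : (Subgroup.map (d1 r) (d0 X Y).ker).Normal :=
      Subgroup.Normal.map (MonoidHom.normal_ker _) _ (d1_surjective r)
    apply Subgroup.normalClosure_le_normal
    rintro _ ⟨y, rfl⟩
    refine ⟨FreeGroup.of (Sum.inr y), ?_, by simp [d1]⟩
    simp [MonoidHom.mem_ker, d0]
end

section
/- The normal closure in FreeGroup (X ⊕ Y) of the set of Peiffer elements { a * b * a⁻¹ * (s0(d1 a) * b * s0(d1 a)⁻¹)⁻¹ | a ∈ K0, b ∈ K0 } equals the commutator subgroup ⁅K0, K1⁆ of the two kernels. (This is the discrete form of the identity P_u(A) = [Ker d0, Ker d1](A) used to construct the crossed module of the presentation.) -/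
/-! The Peiffer element `⟨a, b⟩` is `a` conjugated by the commutator `⁅b, a⁻¹ * s (d₁ a)⁆`, whose
second entry lies in `ker d₁` because `s` splits `d₁`; hence Peiffer elements of `ker d₀` lie in
`⁅ker d₀, ker d₁⁆`. Conversely, for `k ∈ ker d₁` and any `a`, writing `t = s (d₀ k)`, the
commutator `⁅k, a⁆` is literally the Peiffer element `⟨k * t⁻¹, t * a * t⁻¹⟩`, and both entries
lie in `ker d₀` because `s` also splits `d₀`. -/

open scoped commutatorElement

section ReflexivePair

variable {G H : Type*} [Group G] [Group H] (s : H →* G) (d₀ d₁ : G →* H)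

def peifferElement (a b : G) : G :=
  a * b * a⁻¹ * (s (d₁ a) * b * (s (d₁ a))⁻¹)⁻¹

theorem peifferElement_eq_conj_commutatorElement (a b : G) :
    peifferElement s d₁ a b = a * ⁅b, a⁻¹ * s (d₁ a)⁆ * a⁻¹ := by
  simp only [peifferElement, commutatorElement_def]
  group

variable {s d₀ d₁}

theorem peifferElement_mem_commutator (h₁ : d₁.comp s = .id H) (a : G) {b : G}
    (hb : b ∈ d₀.ker) : peifferElement s d₁ a b ∈ ⁅d₀.ker, d₁.ker⁆ := by
  have hc : a⁻¹ * s (d₁ a) ∈ d₁.ker := by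
    rw [MonoidHom.mem_ker, map_mul, map_inv, ← MonoidHom.comp_apply, h₁, MonoidHom.id_apply,
      inv_mul_cancel]
  rw [peifferElement_eq_conj_commutatorElement]
  exact (Subgroup.commutator_normal _ _).conj_mem _ (Subgroup.commutator_mem_commutator hb hc) a

theorem commutatorElement_eq_peifferElement (h₁ : d₁.comp s = .id H) {k : G}
    (hk : k ∈ d₁.ker) (t : H) (a : G) :
    ⁅k, a⁆ = peifferElement s d₁ (k * (s t)⁻¹) (s t * a * (s t)⁻¹) := by
  have hd : d₁ (k * (s t)⁻¹) = t⁻¹ := by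
    rw [map_mul, map_inv, MonoidHom.mem_ker.mp hk, ← MonoidHom.comp_apply, h₁,
      MonoidHom.id_apply, one_mul]
  rw [peifferElement, hd, map_inv, commutatorElement_def]
  group

theorem normalClosure_peiffer_eq_commutator_of_comp_eq_id (h₀ : d₀.comp s = .id H)
    (h₁ : d₁.comp s = .id H) :
    Subgroup.normalClosure {x | ∃ a ∈ d₀.ker, ∃ b ∈ d₀.ker, x = peifferElement s d₁ a b} =
      ⁅d₀.ker, d₁.ker⁆ := by
  apply le_antisymm
  · refine Subgroup.normalClosure_le_normal ?_
    rintro _ ⟨a, -, b, hb, rfl⟩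
    exact peifferElement_mem_commutator h₁ a hb
  · rw [Subgroup.commutator_le]
    intro a ha k hk
    set t := s (d₀ k)
    have hkt : k * t⁻¹ ∈ d₀.ker := by
      rw [MonoidHom.mem_ker, map_mul, map_inv, ← MonoidHom.comp_apply, h₀, MonoidHom.id_apply,
        mul_inv_cancel]
    have hta : t * a * t⁻¹ ∈ d₀.ker := (MonoidHom.normal_ker d₀).conj_mem a ha t
    rw [← commutatorElement_inv]
    exact inv_mem <| Subgroup.subset_normalClosure
      ⟨_, hkt, _, hta, commutatorElement_eq_peifferElement h₁ hk _ a⟩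

end ReflexivePair

/-- The normal closure of the set of Peiffer elements
`a * b * a⁻¹ * (ˢ⁰⁽ᵈ¹ ᵃ⁾b)⁻¹` (for `a, b ∈ K₀ = ker d₀`) equals the commutator subgroup
`⁅K₀, K₁⁆ = ⁅ker d₀, ker d₁⁆`.  This is the discrete form of the identity
`P_u(A) = [Ker d₀, Ker d₁](A)` used to construct the crossed module of the presentation. -/
theorem normalClosure_peiffer_eq_commutator {X Y : Type*} (r : Y → FreeGroup X) :
    Subgroup.normalClosure
        {x : FreeGroup (X ⊕ Y) |
          ∃ a ∈ (d0 X Y).ker, ∃ b ∈ (d0 X Y).ker,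
            x = a * b * a⁻¹ * (s0 X Y (d1 r a) * b * (s0 X Y (d1 r a))⁻¹)⁻¹} =
      ⁅(d0 X Y).ker, (d1 r).ker⁆ :=
  normalClosure_peiffer_eq_commutator_of_comp_eq_id
    (FreeGroup.ext_hom _ _ fun _ => by simp [d0, s0])
    (FreeGroup.ext_hom _ _ fun _ => by simp [d1, s0])
end

section
/- For all a ∈ K0 and c ∈ K0, the element s0(d1 a) * c * (s0(d1 a))⁻¹ * c⁻¹ lies in the subgroup ⁅K0, K1⁆ ⊔ ⁅K0, K0⁆ of FreeGroup (X ⊕ Y). Consequently, every element of R = d1(K0) acts trivially on the abelianization of the crossed module C = K0/⁅K0, K1⁆ of the presentation. -/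
open scoped commutatorElement

namespace Subgroup

variable {G : Type*} [Group G] {H K : Subgroup G} [H.Normal] [K.Normal]

theorem commutatorElement_mul_mem_commutator_sup {a b c : G} (ha : a ∈ H) (hb : b ∈ K)
    (hc : c ∈ H) : ⁅a * b, c⁆ ∈ ⁅H, K⁆ ⊔ ⁅H, H⁆ := by
  rw [commutatorElement_mul_left_eq_conj_mul]
  have hbc : ⁅b, c⁆ ∈ ⁅H, K⁆ := commutator_comm K H ▸ commutator_mem_commutator hb hc
  exact mul_mem (mem_sup_left ((commutator_normal H K).conj_mem _ hbc a))
    (mem_sup_right (commutator_mem_commutator ha hc))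

end Subgroup

theorem d1_s0 {X Y : Type*} (r : Y → FreeGroup X) (w : FreeGroup X) : d1 r (s0 X Y w) = w := by
  have : (d1 r).comp (s0 X Y) = MonoidHom.id (FreeGroup X) := by
    ext x
    simp [d1, s0]
  exact DFunLike.congr_fun this w

/-- For `a, c ∈ K₀ = ker d₀`, the element `s₀(d₁ a) * c * s₀(d₁ a)⁻¹ * c⁻¹` lies in
`⁅K₀, K₁⁆ ⊔ ⁅K₀, K₀⁆`.  Consequently every element of `R = d₁(K₀)` acts trivially on the
abelianization of the crossed module `C = K₀/⁅K₀, K₁⁆` of the presentation. -/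
theorem conj_d1_mul_inv_mem_commutator_sup {X Y : Type*} (r : Y → FreeGroup X)
    (a : FreeGroup (X ⊕ Y)) (ha : a ∈ (d0 X Y).ker)
    (c : FreeGroup (X ⊕ Y)) (hc : c ∈ (d0 X Y).ker) :
    s0 X Y (d1 r a) * c * (s0 X Y (d1 r a))⁻¹ * c⁻¹ ∈
      ⁅(d0 X Y).ker, (d1 r).ker⁆ ⊔ ⁅(d0 X Y).ker, (d0 X Y).ker⁆ := by
  rw [← commutatorElement_def, ← mul_inv_cancel_left a (s0 X Y (d1 r a))]
  have hb : a⁻¹ * s0 X Y (d1 r a) ∈ (d1 r).ker := by simp [MonoidHom.mem_ker, d1_s0]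
  exact Subgroup.commutatorElement_mul_mem_commutator_sup ha hb hc
end

section
/- Let R be the normal closure in FreeGroup X of {r y | y ∈ Y} and G = FreeGroup X ⧸ R. The abelian group C̄ = K0 ⧸ ⁅K0, K0 ⊔ K1⁆ carries a G-module structure induced by the conjugation action g • a = s0(g) * a * s0(g)⁻¹ of FreeGroup X on K0 (the action descends since R acts trivially), and as a module over the group ring ℤ[G] it is free with basis the images of the generators FreeGroup.of (Sum.inr y), y ∈ Y; that is, C̄ is isomorphic as a ℤ[G]-module to the free module Y →₀ ℤ[G]. (This is the discrete form of the formula C̄_u(ℚ_p) ≅ O(G_u)*^{|Y|} for the abelianized free crossed module of the presentation.) -/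
variable {X Y : Type*}

/-- The normal closure `R` of the defining relators in `F(X)`. -/
def RelN (r : Y → FreeGroup X) : Subgroup (FreeGroup X) :=
  Subgroup.normalClosure (Set.range r)

instance (r : Y → FreeGroup X) : (RelN r).Normal := Subgroup.normalClosure_normal

/-- The group `G = F(X) ⧸ R` of the presentation. -/
abbrev Gq (r : Y → FreeGroup X) := FreeGroup X ⧸ RelN r

/-- The subgroup `⁅K₀, K₀ ⊔ K₁⁆` of `K₀ = ker d₀`, viewed as a subgroup of `K₀`. -/
def Nsub (r : Y → FreeGroup X) : Subgroup (d0 X Y).ker :=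
  (⁅(d0 X Y).ker, (d0 X Y).ker ⊔ (d1 r).ker⁆).subgroupOf (d0 X Y).ker

instance (r : Y → FreeGroup X) : (Nsub r).Normal := Subgroup.normal_subgroupOf

open scoped commutatorElement in
/-- The quotient `K₀ ⧸ ⁅K₀, K₀ ⊔ K₁⁆` is abelian. -/
instance (r : Y → FreeGroup X) : CommGroup ((d0 X Y).ker ⧸ Nsub r) :=
  { (inferInstance : Group ((d0 X Y).ker ⧸ Nsub r)) with
    mul_comm := fun a b => by
      induction a using QuotientGroup.induction_on with
      | H x =>
      induction b using QuotientGroup.induction_on with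
      | H y =>
      rw [← QuotientGroup.mk_mul, ← QuotientGroup.mk_mul, QuotientGroup.eq]
      have : (x * y)⁻¹ * (y * x) = ⁅y⁻¹, x⁻¹⁆ := by
        simp [commutatorElement_def]; group
      rw [this, Nsub, Subgroup.mem_subgroupOf]
      have h1 : ((y⁻¹ : (d0 X Y).ker) : FreeGroup (X ⊕ Y)) ∈ (d0 X Y).ker := y⁻¹.2
      have h2 : ((x⁻¹ : (d0 X Y).ker) : FreeGroup (X ⊕ Y)) ∈
          (d0 X Y).ker ⊔ (d1 r).ker := le_sup_left (a := (d0 X Y).ker) x⁻¹.2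
      simpa [commutatorElement_def] using Subgroup.commutator_mem_commutator h1 h2 }

/-- `C̄ = K₀ ⧸ ⁅K₀, K₀ ⊔ K₁⁆`, the abelianized free crossed module, written additively. -/
abbrev Cbar (r : Y → FreeGroup X) := Additive ((d0 X Y).ker ⧸ Nsub r)

/-- The canonical map `K₀ → C̄`. -/
def toCbar (r : Y → FreeGroup X) (a : (d0 X Y).ker) : Cbar r :=
  Additive.ofMul (QuotientGroup.mk a : (d0 X Y).ker ⧸ Nsub r)

/-- Each generator `y ∈ Y` lies in `K₀ = ker d₀`, since `d₀ y = 1`. -/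
lemma of_inr_mem_ker_d0 (y : Y) : FreeGroup.of (Sum.inr y) ∈ (d0 X Y).ker := by
  simp [d0, MonoidHom.mem_ker]

/-- Conjugation by `s₀ g` preserves the normal subgroup `K₀ = ker d₀`. -/
lemma conj_s0_mem_ker_d0 (g : FreeGroup X) {a : FreeGroup (X ⊕ Y)}
    (ha : a ∈ (d0 X Y).ker) : s0 X Y g * a * (s0 X Y g)⁻¹ ∈ (d0 X Y).ker :=
  (d0 X Y).normal_ker.conj_mem a ha (s0 X Y g)


noncomputable def MonoidAlgebra.mulAutOfModule (R G M : Type*) [Semiring R] [Group G]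
    [AddCommGroup M] [Module (MonoidAlgebra R G) M] : G →* MulAut (Multiplicative M) :=
  (MulAutMultiplicative M).symm.toMonoidHom.comp
    ((DistribMulAction.toAddAut _ M).comp (MonoidAlgebra.of R G).toHomUnits)

lemma Subgroup.closure_coe_preimage_eq_top {G : Type*} [Group G] {H : Subgroup G} {s : Set G}
    (h : H = Subgroup.closure s) : Subgroup.closure (((↑) : H → G) ⁻¹' s) = ⊤ := by
  subst h
  exact Subgroup.closure_closure_coe_preimage

@[simp] lemma d0_of_inl (x : X) : d0 X Y (.of (.inl x)) = .of x := by simp [d0]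
@[simp] lemma d0_of_inr (y : Y) : d0 X Y (.of (.inr y)) = 1 := by simp [d0]
@[simp] lemma d1_of_inl (r : Y → FreeGroup X) (x : X) : d1 r (.of (.inl x)) = .of x := by
  simp [d1]
@[simp] lemma d1_of_inr (r : Y → FreeGroup X) (y : Y) : d1 r (.of (.inr y)) = r y := by
  simp [d1]
@[simp] lemma s0_of (x : X) : s0 X Y (.of x) = .of (.inl x) := by simp [s0]

lemma d1_comp_s0 (r : Y → FreeGroup X) : (d1 r).comp (s0 X Y) = .id _ :=
  FreeGroup.ext_hom _ _ fun x => by simp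

lemma ker_d0_eq_normalClosure :
    (d0 X Y).ker = .normalClosure (Set.range fun y : Y => FreeGroup.of (Sum.inr y)) := by
  set M := Subgroup.normalClosure (Set.range fun y : Y => FreeGroup.of (Sum.inr y))
  refine le_antisymm (fun w hw => ?_) <| Subgroup.normalClosure_le_normal <| by
    rintro _ ⟨y, rfl⟩
    exact d0_of_inr y
  have hs0d0 : (QuotientGroup.mk' M).comp ((s0 X Y).comp (d0 X Y)) = QuotientGroup.mk' M := by
    refine FreeGroup.ext_hom _ _ ?_
    rintro (x | y)
    · simp
    · exact ((QuotientGroup.eq_one_iff _).2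
        (Subgroup.subset_normalClosure (Set.mem_range_self y))).symm
  have := DFunLike.congr_fun hs0d0 w
  simp only [MonoidHom.comp_apply, (MonoidHom.mem_ker).1 hw, map_one] at this
  exact (QuotientGroup.eq_one_iff w).1 this.symm

lemma mk_comp_d0_eq_mk_comp_d1 (r : Y → FreeGroup X) :
    (QuotientGroup.mk' (RelN r)).comp (d0 X Y) = (QuotientGroup.mk' (RelN r)).comp (d1 r) := by
  refine FreeGroup.ext_hom _ _ ?_
  rintro (x | y)
  · simp
  · simp only [MonoidHom.comp_apply, d0_of_inr, d1_of_inr, map_one]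
    exact ((QuotientGroup.eq_one_iff _).2
      (Subgroup.subset_normalClosure (Set.mem_range_self (f := r) y))).symm

namespace Cbar

variable (r : Y → FreeGroup X)

lemma toCbar_surjective : Function.Surjective (toCbar r) :=
  Additive.ofMul.surjective.comp QuotientGroup.mk_surjective

lemma toCbar_eq_iff {a b : (d0 X Y).ker} :
    toCbar r a = toCbar r b ↔
      (a : FreeGroup (X ⊕ Y))⁻¹ * b ∈ ⁅(d0 X Y).ker, (d0 X Y).ker ⊔ (d1 r).ker⁆ := by
  rw [toCbar, toCbar, Additive.ofMul.injective.eq_iff, QuotientGroup.eq, Nsub,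
    Subgroup.mem_subgroupOf, Subgroup.coe_mul, Subgroup.coe_inv]

noncomputable def conjAction : FreeGroup (X ⊕ Y) →* Module.End ℤ (Cbar r) where
  toFun g := (QuotientGroup.map (Nsub r) (Nsub r) (MulAut.conjNormal g).toMonoidHom
    fun _ hk => by exact (Subgroup.commutator_normal _ _).conj_mem _ hk g).toAdditive.toIntLinearMap
  map_one' := LinearMap.ext fun c => by
    obtain ⟨a, rfl⟩ := toCbar_surjective r c
    exact congrArg (toCbar r) (Subtype.ext (by simp))
  map_mul' g h := LinearMap.ext fun c => by
    obtain ⟨a, rfl⟩ := toCbar_surjective r c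
    exact congrArg (toCbar r) (Subtype.ext (by simp [mul_assoc]))

lemma conjAction_toCbar (g : FreeGroup (X ⊕ Y)) (a : (d0 X Y).ker) :
    conjAction r g (toCbar r a) =
      toCbar r ⟨g * a * g⁻¹, (d0 X Y).normal_ker.conj_mem _ a.2 g⟩ := rfl

lemma sup_le_ker_conjAction : (d0 X Y).ker ⊔ (d1 r).ker ≤ (conjAction r).ker := by
  intro g hg
  refine LinearMap.ext fun c => ?_
  obtain ⟨a, rfl⟩ := toCbar_surjective r c
  rw [Module.End.one_apply, conjAction_toCbar, toCbar_eq_iff, Subgroup.commutator_comm]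
  convert Subgroup.commutator_mem_commutator hg (inv_mem a.2) using 1
  simp only [commutatorElement_def]
  group

lemma s0_mem_sup_ker (y : Y) : s0 X Y (r y) ∈ (d0 X Y).ker ⊔ (d1 r).ker := by
  have hK1 : s0 X Y (r y) * (FreeGroup.of (Sum.inr y))⁻¹ ∈ (d1 r).ker := by
    simp [MonoidHom.mem_ker, ← MonoidHom.comp_apply, d1_comp_s0]
  simpa [sup_comm] using Subgroup.mul_mem_sup hK1 (of_inr_mem_ker_d0 (X := X) y)

lemma relN_le_ker_conjAction_comp_s0 : RelN r ≤ ((conjAction r).comp (s0 X Y)).ker :=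
  Subgroup.normalClosure_le_normal <| by
    rintro _ ⟨y, rfl⟩
    exact sup_le_ker_conjAction r (s0_mem_sup_ker r y)

noncomputable def rep : Representation ℤ (Gq r) (Cbar r) :=
  QuotientGroup.lift (RelN r) ((conjAction r).comp (s0 X Y)) (relN_le_ker_conjAction_comp_s0 r)

lemma conjAction_eq_rep_comp :
    conjAction r = (rep r).comp ((QuotientGroup.mk' (RelN r)).comp (d0 X Y)) := by
  refine FreeGroup.ext_hom _ _ ?_
  rintro (x | y)
  · simp [rep]
  · simpa using sup_le_ker_conjAction r (Subgroup.mem_sup_left (of_inr_mem_ker_d0 y))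

noncomputable instance : Module (MonoidAlgebra ℤ (Gq r)) (Cbar r) :=
  Module.compHom (Cbar r) (rep r).asAlgebraHom.toRingHom

lemma single_one_smul (q : Gq r) (c : Cbar r) :
    MonoidAlgebra.single q (1 : ℤ) • c = rep r q c :=
  congrArg (· c) ((rep r).asAlgebraHom_single_one q)

noncomputable def toSemidirect : FreeGroup (X ⊕ Y) →*
    Multiplicative (Y →₀ MonoidAlgebra ℤ (Gq r)) ⋊[MonoidAlgebra.mulAutOfModule ℤ _ _] Gq r :=
  FreeGroup.lift <| Sum.elim (fun x => .inr (QuotientGroup.mk (.of x)))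
    fun y => .inl (.ofAdd (Finsupp.single y 1))

lemma rightHom_comp_toSemidirect :
    SemidirectProduct.rightHom.comp (toSemidirect r) =
      (QuotientGroup.mk' (RelN r)).comp (d0 X Y) :=
  FreeGroup.ext_hom _ _ <| by rintro (x | y) <;> simp [toSemidirect]

lemma toSemidirect_comp_s0 :
    (toSemidirect r).comp (s0 X Y) = SemidirectProduct.inr.comp (QuotientGroup.mk' (RelN r)) :=
  FreeGroup.ext_hom _ _ fun x => by simp [toSemidirect]

lemma toSemidirect_eq_inl {w : FreeGroup (X ⊕ Y)} (hw : w ∈ (d0 X Y).ker ⊔ (d1 r).ker) :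
    toSemidirect r w = .inl (toSemidirect r w).left := by
  have hK : (d0 X Y).ker ⊔ (d1 r).ker ≤ ((QuotientGroup.mk' (RelN r)).comp (d0 X Y)).ker :=
    sup_le (fun w hw => by simp_all [MonoidHom.mem_ker])
      (mk_comp_d0_eq_mk_comp_d1 r ▸ fun w hw => by simp_all [MonoidHom.mem_ker])
  have hright : (toSemidirect r w).right = 1 := by
    simpa [← rightHom_comp_toSemidirect] using hK hw
  ext <;> simp [hright]

lemma commutator_le_ker_toSemidirect :
    ⁅(d0 X Y).ker, (d0 X Y).ker ⊔ (d1 r).ker⁆ ≤ (toSemidirect r).ker := by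
  rw [Subgroup.commutator_le]
  intro a ha b hb
  rw [MonoidHom.mem_ker, map_commutatorElement, toSemidirect_eq_inl r (Subgroup.mem_sup_left ha),
    toSemidirect_eq_inl r hb, ← map_commutatorElement,
    commutatorElement_eq_one_iff_mul_comm.2 (mul_comm _ _), map_one]

noncomputable def kerToMultiplicative :
    (d0 X Y).ker →* Multiplicative (Y →₀ MonoidAlgebra ℤ (Gq r)) where
  toFun a := (toSemidirect r a).left
  map_one' := by simp
  map_mul' a b := by
    rw [Subgroup.coe_mul, map_mul, toSemidirect_eq_inl r (Subgroup.mem_sup_left a.2),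
      toSemidirect_eq_inl r (Subgroup.mem_sup_left b.2)]
    simp

lemma toSemidirect_conj_s0_left (g : FreeGroup X) {a : FreeGroup (X ⊕ Y)}
    (ha : a ∈ (d0 X Y).ker) :
    (toSemidirect r (s0 X Y g * a * (s0 X Y g)⁻¹)).left =
      MonoidAlgebra.mulAutOfModule ℤ _ _ (g : Gq r) (toSemidirect r a).left := by
  rw [map_mul, map_mul, map_inv, ← MonoidHom.comp_apply _ (s0 X Y), toSemidirect_comp_s0,
    toSemidirect_eq_inl r (Subgroup.mem_sup_left ha)]
  simp [← map_inv, ← SemidirectProduct.inl_aut]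

noncomputable def toFinsupp :
    Cbar r →ₗ[MonoidAlgebra ℤ (Gq r)] (Y →₀ MonoidAlgebra ℤ (Gq r)) :=
  MonoidAlgebra.equivariantOfLinearOfComm
    (QuotientGroup.lift (Nsub r) (kerToMultiplicative r)
      (fun a ha => congrArg SemidirectProduct.left
        (commutator_le_ker_toSemidirect r ha))).toAdditiveLeft.toIntLinearMap <| by
    intro q c
    obtain ⟨g, rfl⟩ := QuotientGroup.mk_surjective q
    obtain ⟨a, rfl⟩ := toCbar_surjective r c
    rw [single_one_smul]
    exact congrArg Multiplicative.toAdd (toSemidirect_conj_s0_left r g a.2)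

lemma toFinsupp_toCbar (a : (d0 X Y).ker) :
    toFinsupp r (toCbar r a) = (toSemidirect r a).left.toAdd := rfl

lemma toFinsupp_toCbar_of_inr (y : Y) :
    toFinsupp r (toCbar r ⟨.of (.inr y), of_inr_mem_ker_d0 y⟩) = Finsupp.single y 1 := by
  simp [toFinsupp_toCbar, toSemidirect]

noncomputable def ofFinsupp :
    (Y →₀ MonoidAlgebra ℤ (Gq r)) →ₗ[MonoidAlgebra ℤ (Gq r)] Cbar r :=
  Finsupp.linearCombination _ fun y => toCbar r ⟨.of (.inr y), of_inr_mem_ker_d0 y⟩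

lemma toFinsupp_comp_ofFinsupp : toFinsupp r ∘ₗ ofFinsupp r = .id := by
  ext y
  simp [ofFinsupp, toFinsupp_toCbar_of_inr]

lemma toCbar_conj_of_inr (u : FreeGroup (X ⊕ Y)) (y : Y) :
    toCbar r ⟨u * .of (.inr y) * u⁻¹, (d0 X Y).normal_ker.conj_mem _ (of_inr_mem_ker_d0 y) u⟩ =
      ofFinsupp r (Finsupp.single y (MonoidAlgebra.single (d0 X Y u : Gq r) 1)) := by
  change conjAction r u (toCbar r ⟨_, of_inr_mem_ker_d0 y⟩) = _
  rw [conjAction_eq_rep_comp, ← Finsupp.smul_single_one, map_smul, single_one_smul]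
  simp [ofFinsupp]

lemma ofFinsupp_surjective : Function.Surjective (ofFinsupp r) := by
  let S : Subgroup (d0 X Y).ker :=
    (AddSubgroup.toSubgroup' (LinearMap.range (ofFinsupp r)).toAddSubgroup).comap
      (QuotientGroup.mk' (Nsub r))
  have hS : Subgroup.closure (((↑) : (d0 X Y).ker → FreeGroup (X ⊕ Y)) ⁻¹'
      Group.conjugatesOfSet (Set.range fun y : Y => FreeGroup.of (Sum.inr y))) ≤ S := by
    refine Subgroup.closure_le _ |>.2 fun a ha => ?_
    obtain ⟨_, ⟨y, rfl⟩, hconj⟩ := Group.mem_conjugatesOfSet_iff.1 ha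
    obtain ⟨u, hu⟩ := isConj_iff.1 hconj
    obtain rfl : a = ⟨_, (d0 X Y).normal_ker.conj_mem _ (of_inr_mem_ker_d0 y) u⟩ :=
      Subtype.ext hu.symm
    exact ⟨_, (toCbar_conj_of_inr r u y).symm⟩
  rw [Subgroup.closure_coe_preimage_eq_top ker_d0_eq_normalClosure] at hS
  intro c
  obtain ⟨a, rfl⟩ := toCbar_surjective r c
  exact hS (Subgroup.mem_top a)

noncomputable def linearEquivFinsupp :
    Cbar r ≃ₗ[MonoidAlgebra ℤ (Gq r)] (Y →₀ MonoidAlgebra ℤ (Gq r)) :=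
  .ofLinearMap (f := toFinsupp r) (g := ofFinsupp r) (toFinsupp_comp_ofFinsupp r) <|
    LinearMap.ext fun c => by
      obtain ⟨v, rfl⟩ := ofFinsupp_surjective r c
      exact congrArg (ofFinsupp r) (LinearMap.congr_fun (toFinsupp_comp_ofFinsupp r) v)

end Cbar

/-- The abelian group `C̄ = K₀ ⧸ ⁅K₀, K₀ ⊔ K₁⁆` carries a `ℤ[G]`-module structure induced by
the conjugation action `g • a = s₀(g) * a * s₀(g)⁻¹` of `F(X)` on `K₀`, and as a `ℤ[G]`-module
it is free on the images of the generators `y ∈ Y`; i.e. `C̄ ≅ ℤ[G]^{(Y)}`.  This is the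
discrete form of `C̄_u(ℚ_p) ≅ O(G_u)*^{|Y|}`. -/
theorem cbar_free_module (r : Y → FreeGroup X) :
    ∃ _i : Module (MonoidAlgebra ℤ (Gq r)) (Cbar r),
      (∀ (g : FreeGroup X) (a : (d0 X Y).ker),
        (MonoidAlgebra.single (QuotientGroup.mk g : Gq r) (1 : ℤ)) • toCbar r a =
          toCbar r ⟨s0 X Y g * ↑a * (s0 X Y g)⁻¹, conj_s0_mem_ker_d0 g a.2⟩) ∧
      ∃ e : Cbar r ≃ₗ[MonoidAlgebra ℤ (Gq r)] (Y →₀ MonoidAlgebra ℤ (Gq r)),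
        ∀ y : Y, e (toCbar r ⟨FreeGroup.of (Sum.inr y), of_inr_mem_ker_d0 y⟩) =
          Finsupp.single y (1 : MonoidAlgebra ℤ (Gq r)) := by
  refine ⟨inferInstance, fun g a => ?_, Cbar.linearEquivFinsupp r, fun y => ?_⟩
  · rw [Cbar.single_one_smul]
    rfl
  · exact Cbar.toFinsupp_toCbar_of_inr r y
end

section
/- For all m, n ≥ 1, the commutator subgroup ⁅D_m, D_n⁆ is contained in D_{m+n}, where D_n = { g ∈ G | (g : k[G]) - 1 ∈ Δ^n }. (This is the filtration property of the Zassenhaus p-filtration M_n used throughout, ensuring [M_m, M_n] ⊆ M_{m+n}.) -/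
/-- The augmentation homomorphism `ε : k[G] → k`, sending every group element to `1`. -/
noncomputable def aug (k : Type*) [Field k] (G : Type*) [Group G] :
    MonoidAlgebra k G →ₐ[k] k :=
  MonoidAlgebra.lift k k G 1

/-- The augmentation ideal `Δ = ker ε`, viewed as a `k`-submodule of `k[G]`
(so that its powers `Δ^n` make sense in the noncommutative algebra `k[G]`). -/
noncomputable def augIdeal (k : Type*) [Field k] (G : Type*) [Group G] :
    Submodule k (MonoidAlgebra k G) :=
  (RingHom.ker (aug k G).toRingHom).restrictScalars k

/-- The `n`-th dimension subgroup `D_n = { g ∈ G | g - 1 ∈ Δ^n }` (as a set). -/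
noncomputable def dimSet (k : Type*) [Field k] (G : Type*) [Group G] (n : ℕ) : Set G :=
  {g : G | (MonoidAlgebra.of k G g : MonoidAlgebra k G) - 1 ∈ augIdeal k G ^ n}

/-!
In `k[G]` one has `[g, h] - 1 = ((g - 1)(h - 1) - (h - 1)(g - 1)) g⁻¹h⁻¹`, and both products lie
in `Δ^m Δ^n = Δ^(m+n)`. Since `Δ` is a two-sided ideal, `Δ^(m+n)` absorbs the factor `g⁻¹h⁻¹`;
the same absorption makes `D_(m+n)` a subgroup, which therefore contains all of `⁅D_m, D_n⁆`.
-/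

open scoped commutatorElement

namespace Submodule

variable {R A : Type*} [CommSemiring R] [Semiring A] [Algebra R A]

theorem pow_mul_top_le {I : Submodule R A} (hI : I * ⊤ ≤ I) {n : ℕ} (hn : n ≠ 0) :
    I ^ n * ⊤ ≤ I ^ n := by
  obtain ⟨n, rfl⟩ := Nat.exists_eq_succ_of_ne_zero hn
  rw [pow_succ, mul_assoc]
  exact mul_le_mul_right hI _

theorem mul_mem_pow {I : Submodule R A} (hI : I * ⊤ ≤ I) {n : ℕ} (hn : n ≠ 0) {x : A}
    (hx : x ∈ I ^ n) (a : A) : x * a ∈ I ^ n :=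
  pow_mul_top_le hI hn (mul_mem_mul hx mem_top)

end Submodule

theorem map_commutatorElement_sub_one {G A : Type*} [Group G] [Ring A] (f : G →* A) (g h : G) :
    f ⁅g, h⁆ - 1 = ((f g - 1) * (f h - 1) - (f h - 1) * (f g - 1)) * f (g⁻¹ * h⁻¹) := by
  have hinv : f h * f g * f (g⁻¹ * h⁻¹) = 1 := by
    rw [← map_mul, ← map_mul, mul_assoc, mul_inv_cancel_left, mul_inv_cancel, map_one]
  calc f ⁅g, h⁆ - 1 = f g * f h * f (g⁻¹ * h⁻¹) - f h * f g * f (g⁻¹ * h⁻¹) := by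
        rw [hinv, commutatorElement_def, ← map_mul, ← map_mul, mul_assoc (g * h)]
    _ = _ := by noncomm_ring

section DimensionSubgroup

variable {k : Type*} [Field k] {G : Type*} [Group G]

theorem augIdeal_mul_top_le : augIdeal k G * ⊤ ≤ augIdeal k G :=
  Submodule.mul_le.2 fun x hx y _ => by
    have hx : aug k G x = 0 := hx
    change aug k G (x * y) = 0
    rw [map_mul, hx, zero_mul]

theorem mul_mem_augIdeal_pow {n : ℕ} (hn : n ≠ 0) {x : MonoidAlgebra k G}
    (hx : x ∈ augIdeal k G ^ n) (a : MonoidAlgebra k G) : x * a ∈ augIdeal k G ^ n :=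
  Submodule.mul_mem_pow (R := k) augIdeal_mul_top_le hn hx a

theorem commutatorElement_mem_dimSet {m n : ℕ} (hmn : m + n ≠ 0) {g h : G}
    (hg : g ∈ dimSet k G m) (hh : h ∈ dimSet k G n) : ⁅g, h⁆ ∈ dimSet k G (m + n) := by
  change MonoidAlgebra.of k G ⁅g, h⁆ - 1 ∈ augIdeal k G ^ (m + n)
  rw [map_commutatorElement_sub_one]
  refine mul_mem_augIdeal_pow hmn (sub_mem ?_ ?_) _
  · rw [pow_add]
    exact Submodule.mul_mem_mul hg hh
  · rw [add_comm, pow_add]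
    exact Submodule.mul_mem_mul hh hg

variable (k G) in
noncomputable def dimSubgroup {n : ℕ} (hn : n ≠ 0) : Subgroup G where
  carrier := dimSet k G n
  one_mem' := by
    change MonoidAlgebra.of k G 1 - 1 ∈ augIdeal k G ^ n
    rw [map_one, sub_self]
    exact zero_mem _
  mul_mem' {a b} ha hb := by
    change MonoidAlgebra.of k G (a * b) - 1 ∈ augIdeal k G ^ n
    have h : MonoidAlgebra.of k G (a * b) - 1 =
        (MonoidAlgebra.of k G a - 1) * MonoidAlgebra.of k G b + (MonoidAlgebra.of k G b - 1) := by
      rw [map_mul]; noncomm_ring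
    rw [h]
    exact add_mem (mul_mem_augIdeal_pow hn ha _) hb
  inv_mem' {a} ha := by
    change MonoidAlgebra.of k G a⁻¹ - 1 ∈ augIdeal k G ^ n
    have h : MonoidAlgebra.of k G a⁻¹ - 1 =
        -((MonoidAlgebra.of k G a - 1) * MonoidAlgebra.of k G a⁻¹) := by
      rw [sub_mul, ← map_mul, mul_inv_cancel, map_one, one_mul, neg_sub]
    rw [h]
    exact neg_mem (mul_mem_augIdeal_pow hn ha _)

end DimensionSubgroup

theorem commutator_dimSubgroup_subset_general (k : Type*) [Field k] (G : Type*) [Group G]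
    (m n : ℕ) (hm : 1 ≤ m)
    (H K : Subgroup G) (hH : (H : Set G) = dimSet k G m) (hK : (K : Set G) = dimSet k G n) :
    ((⁅H, K⁆ : Subgroup G) : Set G) ⊆ dimSet k G (m + n) := by
  have hmn : m + n ≠ 0 := by omega
  have hle : ⁅H, K⁆ ≤ dimSubgroup k G hmn :=
    Subgroup.commutator_le.2 fun g hg h hh =>
      commutatorElement_mem_dimSet hmn (hH.subset hg) (hK.subset hh)
  exact hle

/-- For `m, n ≥ 1`, the commutator subgroup `⁅D_m, D_n⁆` is contained in `D_{m+n}`: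
this is the filtration property `[M_m, M_n] ⊆ M_{m+n}` of the Zassenhaus `p`-filtration. -/
theorem commutator_dimSubgroup_subset (k : Type*) [Field k] (G : Type*) [Group G]
    (m n : ℕ) (hm : 1 ≤ m) (hn : 1 ≤ n)
    (H K : Subgroup G) (hH : (H : Set G) = dimSet k G m) (hK : (K : Set G) = dimSet k G n) :
    ((⁅H, K⁆ : Subgroup G) : Set G) ⊆ dimSet k G (m + n) :=
  commutator_dimSubgroup_subset_general k G m n hm H K hH hK
end
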